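/- Let f : [0,T] → ℝ be differentiable with f(0) = W and f'(t) ≤ D₂ − D₁ f(t)^{1+η} for all t, where D₁, D₂, η > 0 and f ≥ 0. Define k(t) = D₃ t + (D₁ η t + W^{−η})^{−1/η} for any D₃ ≥ D₂. Then f(t) ≤ k(t) for all t ∈ [0,T]. -/

import Mathlib

/-!
The explicit solution `h(t) = (D₁ η t + W^{-η})^{-1/η}` of `h' = -D₁ h^{1+η}`, `h(0) = W`, gives
`k' = D₃ - D₁ h^{1+η}`. Wherever `f ≥ k` we also have `f ≥ h`, since `D₃ t ≥ 0`, so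
`f' ≤ D₂ - D₁ f^{1+η} ≤ D₃ - D₁ h^{1+η} = k'`. A barrier whose slope dominates that of `f` only
where `f` lies above it still bounds `f`, because it can be pushed up by `ε (x - a)`, making the
comparison strict at the first touching point.
-/

open Set

theorem image_le_of_deriv_right_le_deriv_boundary_of_le {f f' B B' : ℝ → ℝ} {a b : ℝ}
    (hf : ContinuousOn f (Icc a b)) (hf' : ∀ x ∈ Ico a b, HasDerivWithinAt f (f' x) (Ici x) x)
    (ha : f a ≤ B a) (hB : ContinuousOn B (Icc a b))
    (hB' : ∀ x ∈ Ico a b, HasDerivWithinAt B (B' x) (Ici x) x)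
    (bound : ∀ x ∈ Ico a b, B x ≤ f x → f' x ≤ B' x) : ∀ ⦃x⦄, x ∈ Icc a b → f x ≤ B x := by
  have perturbed : ∀ x ∈ Icc a b, ∀ r > 0, f x ≤ B x + r * (x - a) := fun x hx r hr => by
    refine image_le_of_deriv_right_lt_deriv_boundary' hf hf' (by simpa using ha)
      (by fun_prop) (fun y hy => (hB' y hy).add
        (((hasDerivWithinAt_id y (Ici y)).sub_const a).const_mul r)) (fun y hy hfy => ?_) hx
    have hBf : B y ≤ f y := by
      rw [hfy]; exact le_add_of_nonneg_right (mul_nonneg hr.le (sub_nonneg.2 hy.1))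
    simpa using (bound y hy hBf).trans_lt (lt_add_of_pos_right _ hr)
  intro x hx
  have : ContinuousWithinAt (fun r => B x + r * (x - a)) (Ioi 0) 0 := by fun_prop
  convert! continuousWithinAt_const.closure_le _ this (perturbed x hx) using 1 <;> simp

noncomputable def powerDecay (c η W t : ℝ) : ℝ := (c * η * t + W ^ (-η)) ^ (-(1 / η))

theorem powerDecay_zero {c η W : ℝ} (hη : η ≠ 0) (hW : 0 ≤ W) : powerDecay c η W 0 = W := by
  unfold powerDecay
  rw [mul_zero, zero_add, ← Real.rpow_mul hW, neg_mul_neg, mul_one_div_cancel hη,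
    Real.rpow_one]

theorem hasDerivAt_powerDecay {c η W t : ℝ} (hη : η ≠ 0) (ht : 0 < c * η * t + W ^ (-η)) :
    HasDerivAt (powerDecay c η W) (-c * powerDecay c η W t ^ (1 + η)) t := by
  have hu : HasDerivAt (fun s => c * η * s + W ^ (-η)) (c * η) t := by
    simpa using ((hasDerivAt_id t).const_mul (c * η)).add_const (W ^ (-η))
  refine (hu.rpow_const (p := -(1 / η)) (Or.inl ht.ne')).congr_deriv ?_
  unfold powerDecay
  rw [← Real.rpow_mul ht.le]
  field_simp
  ring_nf

theorem stmt9_general (T W D₁ D₂ D₃ η : ℝ) (hW : 0 < W)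
    (hD₁ : 0 < D₁) (hD₂ : 0 < D₂) (hη : 0 < η) (hD₃ : D₂ ≤ D₃)
    (f f' : ℝ → ℝ)
    (hderiv : ∀ t ∈ Set.Icc 0 T, HasDerivAt f (f' t) t)
    (hf0 : f 0 = W)
    (hineq : ∀ t ∈ Set.Icc 0 T, f' t ≤ D₂ - D₁ * (f t) ^ (1 + η))
    (k : ℝ → ℝ)
    (hk : ∀ t : ℝ, k t = D₃ * t + (D₁ * η * t + W ^ (-η)) ^ (-(1 / η))) :
    ∀ t ∈ Set.Icc 0 T, f t ≤ k t := by
  have hk_eq : k = fun t => D₃ * t + powerDecay D₁ η W t := funext hk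
  have hpos : ∀ t ∈ Icc 0 T, 0 < D₁ * η * t + W ^ (-η) := fun t ht => by
    have := ht.1
    positivity
  have hk' : ∀ t ∈ Icc 0 T, HasDerivAt k (D₃ - D₁ * powerDecay D₁ η W t ^ (1 + η)) t :=
    fun t ht => hk_eq ▸ (((hasDerivAt_id' t).const_mul D₃).add
      (hasDerivAt_powerDecay hη.ne' (hpos t ht))).congr_deriv (by ring)
  have hk0 : k 0 = W := by simp [hk_eq, powerDecay_zero hη.ne' hW.le]
  refine image_le_of_deriv_right_le_deriv_boundary_of_le
    (fun t ht => (hderiv t ht).continuousAt.continuousWithinAt)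
    (fun t ht => (hderiv t (Ico_subset_Icc_self ht)).hasDerivWithinAt) (hf0.trans hk0.symm).le
    (fun t ht => (hk' t ht).continuousAt.continuousWithinAt)
    (fun t ht => (hk' t (Ico_subset_Icc_self ht)).hasDerivWithinAt) fun t ht hkf => ?_
  have ht' := Ico_subset_Icc_self ht
  have hdecay_le : powerDecay D₁ η W t ≤ f t := calc
    powerDecay D₁ η W t ≤ k t := by
      rw [hk_eq]; exact le_add_of_nonneg_left (mul_nonneg (hD₂.le.trans hD₃) ht.1)
    _ ≤ f t := hkf
  have hpow : powerDecay D₁ η W t ^ (1 + η) ≤ f t ^ (1 + η) :=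
    Real.rpow_le_rpow (Real.rpow_nonneg (hpos t ht').le _) hdecay_le (by linarith)
  calc f' t ≤ D₂ - D₁ * f t ^ (1 + η) := hineq t ht'
    _ ≤ D₃ - D₁ * powerDecay D₁ η W t ^ (1 + η) := by
      linarith [mul_le_mul_of_nonneg_left hpow hD₁.le]

/-- Differential-inequality comparison: if `f(0) = W > 0`, `f ≥ 0` and
`f' ≤ D₂ − D₁ f^{1+η}` on `[0,T]`, then `f(t) ≤ k(t) = D₃ t + (D₁ η t + W^{−η})^{−1/η}`
on `[0,T]` for any `D₃ ≥ D₂`. -/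
theorem stmt9 (T W D₁ D₂ D₃ η : ℝ) (hT : 0 ≤ T) (hW : 0 < W)
    (hD₁ : 0 < D₁) (hD₂ : 0 < D₂) (hη : 0 < η) (hD₃ : D₂ ≤ D₃)
    (f f' : ℝ → ℝ)
    (hderiv : ∀ t ∈ Set.Icc 0 T, HasDerivAt f (f' t) t)
    (hf0 : f 0 = W)
    (hfnonneg : ∀ t ∈ Set.Icc 0 T, 0 ≤ f t)
    (hineq : ∀ t ∈ Set.Icc 0 T, f' t ≤ D₂ - D₁ * (f t) ^ (1 + η))
    (k : ℝ → ℝ)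
    (hk : ∀ t : ℝ, k t = D₃ * t + (D₁ * η * t + W ^ (-η)) ^ (-(1 / η))) :
    ∀ t ∈ Set.Icc 0 T, f t ≤ k t :=
  stmt9_general T W D₁ D₂ D₃ η hW hD₁ hD₂ hη hD₃ f f' hderiv hf0 hineq k hk
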